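/- Let G be a connected simple graph of order n ≥ 5 that is not isomorphic to the cycle C_n. Then Aut(G) ≅ Aut(L(G)) ≅ Aut(S(G)) ≅ Aut(C(G)) ≅ Aut(M(G)) as abstract groups, where L(G) is the line graph of G. -/

import Mathlib

open SimpleGraph

/-- The subdivision graph `S(G)`: each edge `{u,v}` of `G` is replaced by a new
vertex (the element of `G.edgeSet`) adjacent to both `u` and `v`. -/
def subdivisionGraph {V : Type*} (G : SimpleGraph V) : SimpleGraph (V ⊕ G.edgeSet) where
  Adj x y :=
    match x, y with
    | Sum.inl u, Sum.inr e => u ∈ (e : Sym2 V)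
    | Sum.inr e, Sum.inl u => u ∈ (e : Sym2 V)
    | _, _ => False
  symm := by constructor; rintro (u | e) (v | f) h <;> simp_all
  loopless := by constructor; rintro (u | e) h <;> simp_all

/-- The central graph `C(G)`: obtained from the subdivision graph `S(G)` by joining
every pair of distinct vertices of `G` that are non-adjacent in `G`. -/
def centralGraph {V : Type*} (G : SimpleGraph V) : SimpleGraph (V ⊕ G.edgeSet) where
  Adj x y :=
    match x, y with
    | Sum.inl u, Sum.inl v => u ≠ v ∧ ¬ G.Adj u v
    | Sum.inl u, Sum.inr e => u ∈ (e : Sym2 V)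
    | Sum.inr e, Sum.inl u => u ∈ (e : Sym2 V)
    | Sum.inr _, Sum.inr _ => False
  symm := by
    constructor
    rintro (u | e) (v | f) h
    · exact ⟨h.1.symm, fun a => h.2 a.symm⟩
    · exact h
    · exact h
    · exact h
  loopless := by
    constructor
    rintro (u | e) h
    · exact h.1 rfl
    · exact h

/-- The middle graph `M(G)`: obtained from the subdivision graph `S(G)` by joining
each pair of distinct subdivided vertices corresponding to adjacent edges of `G`. -/
def middleGraph {V : Type*} (G : SimpleGraph V) : SimpleGraph (V ⊕ G.edgeSet) where
  Adj x y :=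
    match x, y with
    | Sum.inl u, Sum.inr e => u ∈ (e : Sym2 V)
    | Sum.inr e, Sum.inl u => u ∈ (e : Sym2 V)
    | Sum.inr e, Sum.inr f => e ≠ f ∧ ∃ u, u ∈ (e : Sym2 V) ∧ u ∈ (f : Sym2 V)
    | Sum.inl _, Sum.inl _ => False
  symm := by
    constructor
    rintro (u | e) (v | f) h
    · exact h
    · exact h
    · exact h
    · exact ⟨h.1.symm, h.2.imp fun u hu => ⟨hu.2, hu.1⟩⟩
  loopless := by
    constructor
    rintro (u | e) h
    · exact h
    · exact h.1 rfl

/-- The line graph `L(G)`: vertices are the edges of `G`, two distinct edges being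
adjacent when they share an endpoint. -/
def lineG {V : Type*} (G : SimpleGraph V) : SimpleGraph G.edgeSet where
  Adj e f := e ≠ f ∧ ∃ u, u ∈ (e : Sym2 V) ∧ u ∈ (f : Sym2 V)
  symm := ⟨fun e f h => ⟨h.1.symm, h.2.imp fun u hu => ⟨hu.2, hu.1⟩⟩⟩
  loopless := ⟨fun e h => h.1 rfl⟩

/-- The endline graph `G⁺`: to each vertex `v` of `G` we attach a new pendant
vertex; `Sum.inl` is the copy of `V(G)` and `Sum.inr` are the new vertices. -/
def endlineGraph {V : Type*} (G : SimpleGraph V) : SimpleGraph (V ⊕ V) where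
  Adj x y :=
    match x, y with
    | Sum.inl u, Sum.inl v => G.Adj u v
    | Sum.inl u, Sum.inr v => u = v
    | Sum.inr u, Sum.inl v => u = v
    | Sum.inr _, Sum.inr _ => False
  symm := by
    constructor
    rintro (u | u) (v | v) h
    · exact h.symm
    · exact h.symm
    · exact h.symm
    · exact h
  loopless := by
    constructor
    rintro (u | u) h
    · exact G.ne_of_adj h rfl
    · exact h

/-- The join `G₁ + G₂` of two vertex-disjoint graphs: their disjoint union together
with all edges between the two vertex sets. -/
def joinGraph {V₁ V₂ : Type*} (G₁ : SimpleGraph V₁) (G₂ : SimpleGraph V₂) :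
    SimpleGraph (V₁ ⊕ V₂) where
  Adj x y :=
    match x, y with
    | Sum.inl u, Sum.inl v => G₁.Adj u v
    | Sum.inr u, Sum.inr v => G₂.Adj u v
    | Sum.inl _, Sum.inr _ => True
    | Sum.inr _, Sum.inl _ => True
  symm := by
    constructor
    rintro (u | u) (v | v) h
    · exact h.symm
    · trivial
    · trivial
    · exact h.symm
  loopless := by
    constructor
    rintro (u | u) h
    · exact G₁.ne_of_adj h rfl
    · exact G₂.ne_of_adj h rfl

/-- The maximum degree `Δ(H)` of a graph (as a supremum of cardinalities of
neighborhoods, which agrees with the usual maximum degree for finite graphs). -/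
noncomputable def maxDeg {W : Type*} (H : SimpleGraph W) : ℕ :=
  sSup {k | ∃ v : W, k = (H.neighborSet v).ncard}

/-- A graph is regular if all vertices have the same degree. -/
def IsRegularGraph {W : Type*} (H : SimpleGraph W) : Prop :=
  ∀ u v : W, (H.neighborSet u).ncard = (H.neighborSet v).ncard

/-- The distinguishing number `D(H)`: the least `d` such that `H` admits a vertex
coloring with `d` colors preserved only by the identity automorphism. -/
noncomputable def distinguishingNumber {W : Type*} (H : SimpleGraph W) : ℕ :=
  sInf {d | ∃ c : W → Fin d, ∀ φ : H ≃g H, (∀ v, c (φ v) = c v) → ∀ v, φ v = v}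

/-- The distinguishing index `D'(H)`: the least `d` such that `H` admits an edge
coloring with `d` colors preserved only by the identity automorphism. -/
noncomputable def distinguishingIndex {W : Type*} (H : SimpleGraph W) : ℕ :=
  sInf {d | ∃ c : H.edgeSet → Fin d,
    ∀ φ : H ≃g H, (∀ e, c (φ.mapEdgeSet e) = c e) → ∀ v, φ v = v}

/-- A proper total coloring of `H` with `d` colors: adjacent vertices, adjacent
edges, and incident vertex/edge pairs receive distinct colors. -/
def IsProperTotalColoring {W : Type*} (H : SimpleGraph W) {d : ℕ}
    (f : W ⊕ H.edgeSet → Fin d) : Prop :=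
  (∀ u v : W, H.Adj u v → f (Sum.inl u) ≠ f (Sum.inl v)) ∧
  (∀ e e' : H.edgeSet, e ≠ e' → (∃ u, u ∈ (e : Sym2 W) ∧ u ∈ (e' : Sym2 W)) →
    f (Sum.inr e) ≠ f (Sum.inr e')) ∧
  (∀ (v : W) (e : H.edgeSet), v ∈ (e : Sym2 W) → f (Sum.inl v) ≠ f (Sum.inr e))

/-- An automorphism `φ` preserves a total coloring `f`. -/
def PreservesTotalColoring {W : Type*} (H : SimpleGraph W) {d : ℕ}
    (f : W ⊕ H.edgeSet → Fin d) (φ : H ≃g H) : Prop :=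
  (∀ v : W, f (Sum.inl (φ v)) = f (Sum.inl v)) ∧
  (∀ e : H.edgeSet, f (Sum.inr (φ.mapEdgeSet e)) = f (Sum.inr e))

/-- The total chromatic number `χ''(H)`. -/
noncomputable def totalChromaticNumber {W : Type*} (H : SimpleGraph W) : ℕ :=
  sInf {d | ∃ f : W ⊕ H.edgeSet → Fin d, IsProperTotalColoring H f}

/-- The total distinguishing chromatic number `χ''_D(H)`: the least `d` such that
`H` has a proper total coloring with `d` colors preserved only by the identity. -/
noncomputable def totalDistinguishingChromaticNumber {W : Type*} (H : SimpleGraph W) : ℕ :=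
  sInf {d | ∃ f : W ⊕ H.edgeSet → Fin d, IsProperTotalColoring H f ∧
    ∀ φ : H ≃g H, PreservesTotalColoring H f φ → ∀ v, φ v = v}

/-- The color class `C_H(u)` of a vertex under a total coloring: the color of `u`
together with the colors of the edges incident to `u`. -/
def totalColorClass {W : Type*} (H : SimpleGraph W) {d : ℕ}
    (f : W ⊕ H.edgeSet → Fin d) (u : W) : Set (Fin d) :=
  {f (Sum.inl u)} ∪ {x | ∃ e : H.edgeSet, u ∈ (e : Sym2 W) ∧ x = f (Sum.inr e)}

/-- An AVD-total coloring: a proper total coloring in which adjacent vertices have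
distinct color classes. -/
def IsAVDTotalColoring {W : Type*} (H : SimpleGraph W) {d : ℕ}
    (f : W ⊕ H.edgeSet → Fin d) : Prop :=
  IsProperTotalColoring H f ∧
  ∀ u v : W, H.Adj u v → totalColorClass H f u ≠ totalColorClass H f v

/-- The AVD-total chromatic number `χ''ₐ(H)`. -/
noncomputable def avdTotalChromaticNumber {W : Type*} (H : SimpleGraph W) : ℕ :=
  sInf {d | ∃ f : W ⊕ H.edgeSet → Fin d, IsAVDTotalColoring H f}

/-- A total dominator coloring: a proper vertex coloring such that every vertex is
adjacent to every vertex of some (nonempty) color class. -/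
def IsTotalDominatorColoring {W : Type*} (H : SimpleGraph W) {d : ℕ}
    (c : W → Fin d) : Prop :=
  (∀ u v : W, H.Adj u v → c u ≠ c v) ∧
  (∀ v : W, ∃ i : Fin d, (∃ w, c w = i) ∧ ∀ w, c w = i → H.Adj v w)

/-- The total dominator chromatic number `χᵗ_d(H)`. -/
noncomputable def tdChromaticNumber {W : Type*} (H : SimpleGraph W) : ℕ :=
  sInf {d | ∃ c : W → Fin d, IsTotalDominatorColoring H c}

/-!
Whitney's argument for the line graph: three edges through a common vertex form a triangle
of `L(G)`, and so do the three sides of a triangle of `G`. An automorphism `φ` of `L(G)` cannot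
exchange the two kinds, because in a connected graph with at least five vertices some edge meets
an odd number of the edges of a star, while every edge meets an even number of the sides of a
triangle. Hence `φ` maps the star of every vertex onto the star of a vertex, and this vertex map
is an automorphism of `G` inducing `φ`.

The vertices of `S(G)`, `C(G)` and `M(G)` are the vertices and the edges of `G`, with incidence
as adjacency between the two kinds. An automorphism that maps vertices of `G` to vertices of `G`
is therefore a pair of incidence-preserving permutations of `V(G)` and `E(G)`, i.e. an
automorphism of `G`. It does so in `M(G)` because the neighbourhood of a vertex is a clique and
that of an edge is not; in `C(G)` because an edge has degree `2` and a vertex degree `n - 1 ≥ 4`;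
and in the bipartite graph `S(G)` because an automorphism exchanging the two sides would give
every vertex of `G` degree `2`, making the connected graph `G` a cycle.
-/

namespace SimpleGraph

variable {V : Type*} {G : SimpleGraph V}

lemma Preconnected.exists_adj_mem_not_mem (hG : G.Preconnected) {S : Set V} {v w : V}
    (hv : v ∈ S) (hw : w ∉ S) : ∃ p ∈ S, ∃ q ∉ S, G.Adj p q := by
  obtain ⟨p⟩ := hG v w
  obtain ⟨d, -, hd, hd'⟩ := p.exists_boundary_dart S hv hw
  exact ⟨d.fst, hd, d.snd, hd', d.adj⟩

lemma Preconnected.exists_adj_mem_not_mem_of_card_lt [Fintype V] (hG : G.Preconnected)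
    {s : Finset V} {v : V} (hv : v ∈ s) (hs : s.card < Fintype.card V) :
    ∃ p ∈ s, ∃ q ∉ s, G.Adj p q := by
  obtain ⟨w, -, hw⟩ := Finset.exists_mem_notMem_of_card_lt_card (t := Finset.univ) hs
  exact hG.exists_adj_mem_not_mem (S := s) hv hw

lemma eq_of_forall_mem_edge_iff [Fintype V] (hG : G.Preconnected) (hn : 3 ≤ Fintype.card V)
    {x y : V} (h : ∀ e : G.edgeSet, x ∈ (e : Sym2 V) ↔ y ∈ (e : Sym2 V)) : x = y := by
  classical
  by_contra hxy
  obtain ⟨p, hp, q, hq, hpq⟩ := hG.exists_adj_mem_not_mem_of_card_lt (s := {x, y})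
    (Finset.mem_insert_self x _) (Finset.card_le_two.trans_lt (by omega))
  have := h ⟨s(p, q), hpq⟩
  simp only [Finset.mem_insert, Finset.mem_singleton] at hp hq
  simp only [Sym2.mem_iff] at this
  grind

lemma exists_mem_edge_ne_of_leaf [Fintype V] (hG : G.Preconnected) (hn : 3 ≤ Fintype.card V)
    {u w : V} (huw : G.Adj u w)
    (hleaf : ∀ e : G.edgeSet, u ∈ (e : Sym2 V) → (e : Sym2 V) = s(u, w)) :
    ∃ e : G.edgeSet, w ∈ (e : Sym2 V) ∧ (e : Sym2 V) ≠ s(u, w) := by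
  classical
  obtain ⟨p, hp, q, hq, hpq⟩ := hG.exists_adj_mem_not_mem_of_card_lt (s := {u, w})
    (Finset.mem_insert_self u _) (Finset.card_le_two.trans_lt (by omega))
  simp only [Finset.mem_insert, Finset.mem_singleton, not_or] at hp hq
  rcases hp with rfl | rfl
  · have := hleaf ⟨s(p, q), hpq⟩ (Sym2.mem_mk_left p q)
    simp only [Sym2.eq_iff] at this
    grind
  · refine ⟨⟨s(p, q), hpq⟩, Sym2.mem_mk_left p q, fun h => ?_⟩
    simp only [Sym2.eq_iff] at h
    grind

namespace Iso

lemma coe_mapEdgeSet (σ : G ≃g G) (e : G.edgeSet) :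
    (σ.mapEdgeSet e : Sym2 V) = Sym2.map σ e := rfl

lemma mem_mapEdgeSet_iff (σ : G ≃g G) {u : V} {e : G.edgeSet} :
    σ u ∈ (σ.mapEdgeSet e : Sym2 V) ↔ u ∈ (e : Sym2 V) := by
  rw [coe_mapEdgeSet, Sym2.mem_map]
  exact ⟨fun ⟨_, ha, h⟩ => σ.injective h ▸ ha, fun h => ⟨u, h, rfl⟩⟩

lemma mapEdgeSet_one (e : G.edgeSet) : (1 : G ≃g G).mapEdgeSet e = e :=
  Subtype.ext (by simp)

lemma mapEdgeSet_mul (σ τ : G ≃g G) (e : G.edgeSet) :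
    (σ * τ).mapEdgeSet e = σ.mapEdgeSet (τ.mapEdgeSet e) :=
  Subtype.ext (by simp [Sym2.map_map])

lemma lineG_adj_mapEdgeSet_iff (σ : G ≃g G) {e f : G.edgeSet} :
    (lineG G).Adj (σ.mapEdgeSet e) (σ.mapEdgeSet f) ↔ (lineG G).Adj e f := by
  refine and_congr σ.mapEdgeSet.injective.ne_iff ⟨fun ⟨w, hwe, hwf⟩ => ?_, fun ⟨w, hwe, hwf⟩ => ?_⟩
  · obtain ⟨u, rfl⟩ := σ.surjective w
    exact ⟨u, σ.mem_mapEdgeSet_iff.1 hwe, σ.mem_mapEdgeSet_iff.1 hwf⟩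
  · exact ⟨σ w, σ.mem_mapEdgeSet_iff.2 hwe, σ.mem_mapEdgeSet_iff.2 hwf⟩

section ofIncidence

variable (α : V ≃ V) (β : G.edgeSet ≃ G.edgeSet)
  (h : ∀ u e, α u ∈ (β e : Sym2 V) ↔ u ∈ (e : Sym2 V))
include h

lemma map_eq_of_incidence (e : G.edgeSet) : Sym2.map α e = β e := by
  obtain ⟨e, he⟩ := e
  induction e using Sym2.ind with
  | _ u v =>
    have huv : α u ≠ α v := α.injective.ne (G.ne_of_adj he)
    exact ((Sym2.mem_and_mem_iff huv).1
      ⟨(h u _).2 (Sym2.mem_mk_left u v), (h v _).2 (Sym2.mem_mk_right u v)⟩).symm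

lemma map_mem_edgeSet_iff_of_incidence (z : Sym2 V) :
    Sym2.map α z ∈ G.edgeSet ↔ z ∈ G.edgeSet := by
  refine ⟨fun hz => ?_, fun hz => map_eq_of_incidence α β h ⟨z, hz⟩ ▸ (β _).2⟩
  have hmap := map_eq_of_incidence α β h (β.symm ⟨_, hz⟩)
  rw [Equiv.apply_symm_apply] at hmap
  exact Sym2.map.injective α.injective hmap ▸ (β.symm _).2

def ofIncidence : G ≃g G where
  toEquiv := α
  map_rel_iff' {u v} := map_mem_edgeSet_iff_of_incidence α β h s(u, v)

lemma mapEdgeSet_ofIncidence (e : G.edgeSet) : (ofIncidence α β h).mapEdgeSet e = β e :=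
  Subtype.ext (map_eq_of_incidence α β h e)

end ofIncidence

end Iso

lemma _root_.Sym2.common_mem_or_triangle {α : Type*} {e f g : Sym2 α}
    (hef : ∃ x, x ∈ e ∧ x ∈ f) (heg : ∃ y, y ∈ e ∧ y ∈ g) (hfg : ∃ z, z ∈ f ∧ z ∈ g) :
    (∃ v, v ∈ e ∧ v ∈ f ∧ v ∈ g) ∨
      ∃ a b c, a ≠ b ∧ b ≠ c ∧ c ≠ a ∧ e = s(a, b) ∧ f = s(b, c) ∧ g = s(c, a) := by
  obtain ⟨x, hxe, hxf⟩ := hef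
  obtain ⟨y, hye, hyg⟩ := heg
  obtain ⟨z, hzf, hzg⟩ := hfg
  by_cases hxy : x = y
  · exact .inl ⟨x, hxe, hxf, hxy ▸ hyg⟩
  by_cases hzx : z = x
  · exact .inl ⟨x, hxe, hxf, hzx ▸ hzg⟩
  by_cases hzy : z = y
  · exact .inl ⟨y, hye, hzy ▸ hzf, hyg⟩
  refine .inr ⟨y, x, z, Ne.symm hxy, Ne.symm hzx, hzy, ?_, ?_, ?_⟩
  · rw [Sym2.eq_swap]
    exact (Sym2.mem_and_mem_iff hxy).1 ⟨hxe, hye⟩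
  · exact (Sym2.mem_and_mem_iff (Ne.symm hzx)).1 ⟨hxf, hzf⟩
  · exact (Sym2.mem_and_mem_iff hzy).1 ⟨hzg, hyg⟩

/-- The chained `↔` holds exactly when `h` is adjacent to an odd number of `e, f, g`. -/
def AdjOdd {W : Type*} (H : SimpleGraph W) (h e f g : W) : Prop :=
  (H.Adj h e ↔ H.Adj h f) ↔ H.Adj h g

lemma Iso.adjOdd_iff {W W' : Type*} {H : SimpleGraph W} {H' : SimpleGraph W'} (φ : H ≃g H')
    {h e f g : W} : AdjOdd H' (φ h) (φ e) (φ f) (φ g) ↔ AdjOdd H h e f g := by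
  simp only [AdjOdd, φ.map_adj_iff]

lemma not_adjOdd_lineG_of_triangle {e f g : G.edgeSet} {a b c : V} (hab : a ≠ b) (hbc : b ≠ c)
    (hca : c ≠ a) (he : (e : Sym2 V) = s(a, b)) (hf : (f : Sym2 V) = s(b, c))
    (hg : (g : Sym2 V) = s(c, a)) (h : G.edgeSet) : ¬ AdjOdd (lineG G) h e f g := by
  obtain ⟨h, hh⟩ := h
  induction h using Sym2.ind with
  | _ p q =>
    have hpq : p ≠ q := G.ne_of_adj hh
    simp only [AdjOdd, lineG, ne_eq, Subtype.ext_iff, he, hf, hg, Sym2.eq_iff, Sym2.mem_iff,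
      or_and_right, exists_or, exists_eq_left]
    grind

lemma exists_adjOdd_lineG_of_star [Fintype V] (hG : G.Preconnected) (hn : 5 ≤ Fintype.card V)
    {e f g : G.edgeSet} (hef : e ≠ f) (heg : e ≠ g) (hfg : f ≠ g) {v : V}
    (he : v ∈ (e : Sym2 V)) (hf : v ∈ (f : Sym2 V)) (hg : v ∈ (g : Sym2 V)) :
    ∃ h, AdjOdd (lineG G) h e f g := by
  classical
  have hva : v ≠ Sym2.Mem.other he := (Sym2.other_ne (G.not_isDiag_of_mem_edgeSet e.2) he).symm
  have hvb : v ≠ Sym2.Mem.other hf := (Sym2.other_ne (G.not_isDiag_of_mem_edgeSet f.2) hf).symm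
  have hvc : v ≠ Sym2.Mem.other hg := (Sym2.other_ne (G.not_isDiag_of_mem_edgeSet g.2) hg).symm
  have hea := (Sym2.other_spec he).symm
  have hfb := (Sym2.other_spec hf).symm
  have hgc := (Sym2.other_spec hg).symm
  set a := Sym2.Mem.other he
  set b := Sym2.Mem.other hf
  set c := Sym2.Mem.other hg
  -- an edge leaving `{v, a, b, c}` meets all three of `e, f, g` or exactly one of them
  obtain ⟨p, hp, q, hq, hpq⟩ := hG.exists_adj_mem_not_mem_of_card_lt (s := {v, a, b, c})
    (Finset.mem_insert_self v _) (Finset.card_le_four.trans_lt (by omega))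
  refine ⟨⟨s(p, q), hpq⟩, ?_⟩
  have hpq' : p ≠ q := G.ne_of_adj hpq
  simp only [Finset.mem_insert, Finset.mem_singleton] at hp hq
  simp only [ne_eq, Subtype.ext_iff, hea, hfb, hgc, Sym2.eq_iff] at hef heg hfg
  simp only [AdjOdd, lineG, ne_eq, Subtype.ext_iff, hea, hfb, hgc, Sym2.eq_iff, Sym2.mem_iff,
    or_and_right, exists_or, exists_eq_left]
  grind

namespace Iso

variable [Fintype V]

lemma exists_common_mem_lineG (hG : G.Preconnected) (hn : 5 ≤ Fintype.card V)
    (φ : lineG G ≃g lineG G) {e f g : G.edgeSet} (hef : e ≠ f) (heg : e ≠ g) (hfg : f ≠ g)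
    {v : V} (he : v ∈ (e : Sym2 V)) (hf : v ∈ (f : Sym2 V)) (hg : v ∈ (g : Sym2 V)) :
    ∃ x, x ∈ (φ e : Sym2 V) ∧ x ∈ (φ f : Sym2 V) ∧ x ∈ (φ g : Sym2 V) := by
  have meet {k l : G.edgeSet} (hkl : k ≠ l) (hk : v ∈ (k : Sym2 V)) (hl : v ∈ (l : Sym2 V)) :
      ∃ x, x ∈ (φ k : Sym2 V) ∧ x ∈ (φ l : Sym2 V) :=
    (φ.map_adj_iff.2 ⟨hkl, v, hk, hl⟩).2
  rcases Sym2.common_mem_or_triangle (meet hef he hf) (meet heg he hg) (meet hfg hf hg) with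
    hstar | ⟨a, b, c, hab, hbc, hca, hae, hbf, hcg⟩
  · exact hstar
  · obtain ⟨h, hodd⟩ := exists_adjOdd_lineG_of_star hG hn hef heg hfg he hf hg
    exact absurd (φ.adjOdd_iff.2 hodd) (not_adjOdd_lineG_of_triangle hab hbc hca hae hbf hcg _)

lemma mem_lineG_of_mem_of_mem (hG : G.Preconnected) (hn : 5 ≤ Fintype.card V)
    (φ : lineG G ≃g lineG G) {e₁ e₂ e : G.edgeSet} (h₁₂ : e₁ ≠ e₂) {u x : V}
    (hu₁ : u ∈ (e₁ : Sym2 V)) (hu₂ : u ∈ (e₂ : Sym2 V)) (hx₁ : x ∈ (φ e₁ : Sym2 V))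
    (hx₂ : x ∈ (φ e₂ : Sym2 V)) (hu : u ∈ (e : Sym2 V)) : x ∈ (φ e : Sym2 V) := by
  rcases eq_or_ne e e₁ with rfl | he₁
  · exact hx₁
  rcases eq_or_ne e e₂ with rfl | he₂
  · exact hx₂
  obtain ⟨y, hy₁, hy₂, hy⟩ :=
    φ.exists_common_mem_lineG hG hn h₁₂ he₁.symm he₂.symm hu₁ hu₂ hu
  obtain rfl : x = y := by
    by_contra hxy
    exact h₁₂ (φ.injective (Subtype.ext (Sym2.eq_of_ne_mem hxy hx₁ hy₁ hx₂ hy₂)))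
  exact hy

lemma exists_forall_mem_lineG_iff_of_two (hG : G.Preconnected) (hn : 5 ≤ Fintype.card V)
    (φ : lineG G ≃g lineG G) {e₁ e₂ : G.edgeSet} (h₁₂ : e₁ ≠ e₂) {u : V}
    (hu₁ : u ∈ (e₁ : Sym2 V)) (hu₂ : u ∈ (e₂ : Sym2 V)) :
    ∃ x, ∀ e : G.edgeSet, x ∈ (φ e : Sym2 V) ↔ u ∈ (e : Sym2 V) := by
  obtain ⟨x, hx₁, hx₂⟩ := (φ.map_adj_iff.2 ⟨h₁₂, u, hu₁, hu₂⟩).2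
  refine ⟨x, fun e => ⟨fun hx => ?_, φ.mem_lineG_of_mem_of_mem hG hn h₁₂ hu₁ hu₂ hx₁ hx₂⟩⟩
  have := φ.symm.mem_lineG_of_mem_of_mem hG hn (φ.injective.ne h₁₂) hx₁ hx₂
    (by simpa using hu₁) (by simpa using hu₂) hx
  simpa using this

lemma exists_forall_mem_lineG_iff (hG : G.Preconnected) (hn : 5 ≤ Fintype.card V)
    (φ : lineG G ≃g lineG G) (u : V) :
    ∃ x, ∀ e : G.edgeSet, x ∈ (φ e : Sym2 V) ↔ u ∈ (e : Sym2 V) := by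
  by_cases htwo : ∃ e₁ e₂ : G.edgeSet, e₁ ≠ e₂ ∧ u ∈ (e₁ : Sym2 V) ∧ u ∈ (e₂ : Sym2 V)
  · obtain ⟨e₁, e₂, h₁₂, hu₁, hu₂⟩ := htwo
    exact φ.exists_forall_mem_lineG_iff_of_two hG hn h₁₂ hu₁ hu₂
  push Not at htwo
  have : Nontrivial V := Fintype.one_lt_card_iff_nontrivial.1 (by omega)
  obtain ⟨w, huw⟩ := hG.exists_adj_of_nontrivial u
  set e₀ : G.edgeSet := ⟨s(u, w), huw⟩
  have hleaf (e : G.edgeSet) (hu : u ∈ (e : Sym2 V)) : e = e₀ := by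
    by_contra hne
    exact htwo e e₀ hne hu (Sym2.mem_mk_left u w)
  obtain ⟨e₁, hw₁, h₁₀⟩ :=
    exists_mem_edge_ne_of_leaf hG (by omega) huw fun e hu => congrArg Subtype.val (hleaf e hu)
  obtain ⟨xw, hxw⟩ := φ.exists_forall_mem_lineG_iff_of_two hG hn (e₁ := e₀) (e₂ := e₁)
    (fun h => h₁₀ (congrArg Subtype.val h).symm) (Sym2.mem_mk_right u w) hw₁
  have hxw₀ : xw ∈ (φ e₀ : Sym2 V) := (hxw e₀).2 (Sym2.mem_mk_right u w)
  -- the pendant vertex `u` goes to the endpoint of `φ e₀` other than the image `xw` of `w`; if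
  -- that endpoint lay on a second edge, `φ⁻¹` would map its star onto the star of `u` or `w`
  refine ⟨Sym2.Mem.other hxw₀,
    fun e => ⟨fun hx => ?_, fun hu => hleaf e hu ▸ Sym2.other_mem hxw₀⟩⟩
  by_contra hu
  have he₀ : e ≠ e₀ := fun h => hu (h ▸ Sym2.mem_mk_left u w)
  obtain ⟨y, hy⟩ := φ.symm.exists_forall_mem_lineG_iff_of_two hG hn (φ.injective.ne he₀) hx
    (Sym2.other_mem hxw₀)
  have hye : y ∈ (e : Sym2 V) := by simpa using (hy (φ e)).2 hx
  have hye₀ : y = u ∨ y = w := by simpa [e₀] using (hy (φ e₀)).2 (Sym2.other_mem hxw₀)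
  rcases hye₀ with rfl | rfl
  · exact hu hye
  · refine Sym2.other_ne (G.not_isDiag_of_mem_edgeSet (φ e₀).2) hxw₀
      (eq_of_forall_mem_edge_iff hG (by omega) fun f => ?_)
    simpa [hy] using (hxw (φ.symm f)).symm

end Iso

def lineGAutHom : (G ≃g G) →* (lineG G ≃g lineG G) where
  toFun σ := ⟨σ.mapEdgeSet, σ.lineG_adj_mapEdgeSet_iff⟩
  map_one' := RelIso.ext Iso.mapEdgeSet_one
  map_mul' σ τ := RelIso.ext (Iso.mapEdgeSet_mul σ τ)

theorem Connected.nonempty_mulEquiv_aut_lineG [Fintype V] (hG : G.Connected)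
    (hn : 5 ≤ Fintype.card V) : Nonempty ((G ≃g G) ≃* (lineG G ≃g lineG G)) := by
  refine ⟨.ofBijective lineGAutHom
    ⟨(injective_iff_map_eq_one _).2 fun σ hσ => ?_, fun φ => ?_⟩⟩
  · ext u
    refine eq_of_forall_mem_edge_iff hG.preconnected (by omega) fun e => ?_
    have hσe : σ.mapEdgeSet e = e := RelIso.ext_iff.1 hσ e
    simpa [hσe] using σ.mem_mapEdgeSet_iff (u := u) (e := e)
  · choose α hα using φ.exists_forall_mem_lineG_iff hG.preconnected hn
    have hinj : Function.Injective α := fun u v huv =>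
      eq_of_forall_mem_edge_iff hG.preconnected (by omega) fun e =>
        (hα u e).symm.trans (huv ▸ hα v e)
    exact ⟨Iso.ofIncidence (.ofBijective α (Finite.injective_iff_bijective.1 hinj)) φ.toEquiv hα,
      RelIso.ext (Iso.mapEdgeSet_ofIncidence _ _ _)⟩

def Iso.sumMapEdgeSet (σ : G ≃g G) : V ⊕ G.edgeSet ≃ V ⊕ G.edgeSet :=
  σ.toEquiv.sumCongr σ.mapEdgeSet

section IncidenceGraph

variable (H : SimpleGraph (V ⊕ G.edgeSet))
  (hnat : ∀ (σ : G ≃g G) x y, H.Adj (σ.sumMapEdgeSet x) (σ.sumMapEdgeSet y) ↔ H.Adj x y)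
include hnat

def sumAutHom : (G ≃g G) →* (H ≃g H) where
  toFun σ := ⟨σ.sumMapEdgeSet, hnat σ _ _⟩
  map_one' := RelIso.ext fun x => by
    cases x
    exacts [rfl, congrArg Sum.inr (Iso.mapEdgeSet_one _)]
  map_mul' σ τ := RelIso.ext fun x => by
    cases x
    exacts [rfl, congrArg Sum.inr (Iso.mapEdgeSet_mul σ τ _)]

theorem nonempty_mulEquiv_aut_of_mapsTo_inl [Finite V]
    (hinc : ∀ u e, H.Adj (.inl u) (.inr e) ↔ u ∈ (e : Sym2 V))
    (hinl : ∀ φ : H ≃g H, Set.MapsTo φ (Set.range .inl) (Set.range .inl)) :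
    Nonempty ((G ≃g G) ≃* (H ≃g H)) := by
  refine ⟨.ofBijective (sumAutHom H hnat) ⟨fun σ τ hστ => ?_, fun φ => ?_⟩⟩
  · ext u
    simpa [sumAutHom, Iso.sumMapEdgeSet] using RelIso.ext_iff.1 hστ (.inl u)
  · obtain ⟨⟨α, β⟩, hαβ⟩ := Equiv.Perm.mem_sumCongrHom_range_of_perm_mapsTo_inl (hinl φ)
    have hφ (x) : φ x = Sum.map α β x := (Equiv.ext_iff.1 hαβ x).symm
    have hαβ (u e) : α u ∈ (β e : Sym2 V) ↔ u ∈ (e : Sym2 V) := by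
      simpa [hφ, hinc] using φ.map_adj_iff (v := .inl u) (w := .inr e)
    refine ⟨Iso.ofIncidence α β hαβ, RelIso.ext fun x => ?_⟩
    rw [hφ]
    cases x
    exacts [rfl, congrArg Sum.inr (Iso.mapEdgeSet_ofIncidence α β hαβ _)]

end IncidenceGraph

lemma Iso.isClique_neighborSet {W W' : Type*} {H : SimpleGraph W} {H' : SimpleGraph W'}
    (φ : H ≃g H') {x : W} (h : H.IsClique (H.neighborSet x)) :
    H'.IsClique (H'.neighborSet (φ x)) := by
  rw [← φ.image_neighborSet]
  rintro _ ⟨a, ha, rfl⟩ _ ⟨b, hb, rfl⟩ hab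
  exact φ.map_adj_iff.2 (h ha hb (ne_of_apply_ne φ hab))

lemma Iso.ncard_neighborSet {W W' : Type*} {H : SimpleGraph W} {H' : SimpleGraph W'}
    (φ : H ≃g H') (x : W) : (H'.neighborSet (φ x)).ncard = (H.neighborSet x).ncard := by
  rw [← φ.image_neighborSet, Set.ncard_image_of_injective _ φ.injective]

lemma ncard_neighborSet_inr (H : SimpleGraph (V ⊕ G.edgeSet))
    (hinc : ∀ u e, H.Adj (.inl u) (.inr e) ↔ u ∈ (e : Sym2 V))
    (hrr : ∀ e f, ¬ H.Adj (.inr e) (.inr f)) (e : G.edgeSet) :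
    (H.neighborSet (.inr e)).ncard = 2 := by
  obtain ⟨e, he⟩ := e
  induction e using Sym2.ind with
  | _ a b =>
    have hnbr : H.neighborSet (.inr ⟨s(a, b), he⟩) = Sum.inl '' {a, b} := by
      ext (v | f)
      · simp [adj_comm, hinc]
      · simp [hrr]
    rw [hnbr, Set.ncard_image_of_injective _ Sum.inl_injective, Set.ncard_pair (G.ne_of_adj he)]

lemma subdivisionGraph_adj_sumMapEdgeSet (σ : G ≃g G) (x y : V ⊕ G.edgeSet) :
    (subdivisionGraph G).Adj (σ.sumMapEdgeSet x) (σ.sumMapEdgeSet y) ↔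
      (subdivisionGraph G).Adj x y := by
  rcases x with u | e <;> rcases y with v | f
  · exact Iff.rfl
  · exact σ.mem_mapEdgeSet_iff
  · exact σ.mem_mapEdgeSet_iff
  · exact Iff.rfl

lemma centralGraph_adj_sumMapEdgeSet (σ : G ≃g G) (x y : V ⊕ G.edgeSet) :
    (centralGraph G).Adj (σ.sumMapEdgeSet x) (σ.sumMapEdgeSet y) ↔
      (centralGraph G).Adj x y := by
  rcases x with u | e <;> rcases y with v | f
  · exact and_congr σ.injective.ne_iff (not_congr σ.map_adj_iff)
  · exact σ.mem_mapEdgeSet_iff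
  · exact σ.mem_mapEdgeSet_iff
  · exact Iff.rfl

lemma middleGraph_adj_sumMapEdgeSet (σ : G ≃g G) (x y : V ⊕ G.edgeSet) :
    (middleGraph G).Adj (σ.sumMapEdgeSet x) (σ.sumMapEdgeSet y) ↔
      (middleGraph G).Adj x y := by
  rcases x with u | e <;> rcases y with v | f
  · exact Iff.rfl
  · exact σ.mem_mapEdgeSet_iff
  · exact σ.mem_mapEdgeSet_iff
  · exact σ.lineG_adj_mapEdgeSet_iff

lemma middleGraph_isClique_neighborSet_inl (u : V) :
    (middleGraph G).IsClique ((middleGraph G).neighborSet (.inl u)) := by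
  rintro (_ | e) he (_ | f) hf hef
  · exact he.elim
  · exact he.elim
  · exact hf.elim
  · exact ⟨fun h => hef (congrArg Sum.inr h), u, he, hf⟩

lemma middleGraph_not_isClique_neighborSet_inr (e : G.edgeSet) :
    ¬ (middleGraph G).IsClique ((middleGraph G).neighborSet (.inr e)) := by
  obtain ⟨e, he⟩ := e
  induction e using Sym2.ind with
  | _ a b =>
    intro h
    exact h (Sym2.mem_mk_left a b) (Sym2.mem_mk_right a b)
      (fun hab => G.ne_of_adj he (Sum.inl_injective hab))

lemma middleGraph_mapsTo_inl (φ : middleGraph G ≃g middleGraph G) :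
    Set.MapsTo φ (Set.range .inl) (Set.range .inl) := by
  rintro _ ⟨u, rfl⟩
  rcases hφ : φ (.inl u) with v | e
  · exact ⟨v, rfl⟩
  · have := φ.isClique_neighborSet (middleGraph_isClique_neighborSet_inl u)
    rw [hφ] at this
    exact absurd this (middleGraph_not_isClique_neighborSet_inr e)

lemma card_sub_one_le_ncard_neighborSet_centralGraph_inl [Finite V] (u : V) :
    Nat.card V - 1 ≤ ((centralGraph G).neighborSet (.inl u)).ncard := by
  classical
  let nb (w : V) : V ⊕ G.edgeSet := if h : G.Adj u w then .inr ⟨s(u, w), h⟩ else .inl w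
  calc Nat.card V - 1 = ({u}ᶜ : Set V).ncard := by
        rw [Set.compl_eq_univ_sdiff, Set.ncard_sdiff_singleton_of_mem (Set.mem_univ u),
          Set.ncard_univ]
    _ ≤ _ := Set.ncard_le_ncard_of_injOn nb (fun w hw => ?_) (fun w _ w' _ hww => ?_)
  · by_cases h : G.Adj u w
    · simp only [nb, dif_pos h]
      exact Sym2.mem_mk_left u w
    · simpa [nb, h, centralGraph] using Ne.symm hw
  · simp only [nb] at hww
    split_ifs at hww
    · exact Sym2.congr_right.1 (congrArg Subtype.val (Sum.inr_injective hww))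
    · exact Sum.inl_injective hww

lemma centralGraph_mapsTo_inl [Finite V] (hn : 4 ≤ Nat.card V)
    (φ : centralGraph G ≃g centralGraph G) :
    Set.MapsTo φ (Set.range .inl) (Set.range .inl) := by
  rintro _ ⟨u, rfl⟩
  rcases hφ : φ (.inl u) with v | e
  · exact ⟨v, rfl⟩
  · have h2 := ncard_neighborSet_inr (centralGraph G) (fun _ _ => Iff.rfl) (fun _ _ => id) e
    have := card_sub_one_le_ncard_neighborSet_centralGraph_inl (G := G) u
    rw [← φ.ncard_neighborSet, hφ, h2] at this
    omega

lemma Copy.map_neighborFinset_eq {W : Type*} {A : SimpleGraph W} [Fintype W] [Fintype V]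
    [DecidableRel A.Adj] [DecidableRel G.Adj] (f : Copy A G) {a : W}
    (hdeg : G.degree (f a) = A.degree a) :
    (A.neighborFinset a).map f.toEmbedding = G.neighborFinset (f a) := by
  refine Finset.eq_of_subset_of_card_le (fun y hy => ?_) (by simp [hdeg])
  obtain ⟨b, hb, rfl⟩ := Finset.mem_map.1 hy
  simpa [Copy.toEmbedding] using f.toHom.map_adj ((A.mem_neighborFinset a b).1 hb)

lemma Copy.nonempty_iso_of_degree_eq {W : Type*} {A : SimpleGraph W} [Fintype W] [Fintype V]
    [DecidableRel A.Adj] [DecidableRel G.Adj] [Nonempty W] (hG : G.Preconnected)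
    (f : Copy A G) (hdeg : ∀ a, G.degree (f a) = A.degree a) : Nonempty (A ≃g G) := by
  have hnbr : ∀ a y, G.Adj (f a) y → ∃ b, A.Adj a b ∧ f b = y := fun a y hy => by
    rw [← G.mem_neighborFinset, ← f.map_neighborFinset_eq (hdeg a)] at hy
    simpa [Copy.toEmbedding] using hy
  have hsurj : Function.Surjective f := by
    by_contra hns
    obtain ⟨y, hy⟩ : ∃ y, y ∉ Set.range f := not_forall.1 hns
    obtain ⟨p, ⟨a, rfl⟩, q, hq, hpq⟩ :=
      hG.exists_adj_mem_not_mem (Set.mem_range_self (Classical.arbitrary W)) hy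
    obtain ⟨b, -, rfl⟩ := hnbr a q hpq
    exact hq (Set.mem_range_self b)
  refine ⟨⟨Equiv.ofBijective f ⟨f.injective, hsurj⟩, fun {a b} => ⟨fun hab => ?_, f.toHom.map_adj⟩⟩⟩
  obtain ⟨c, hac, hc⟩ := hnbr a _ hab
  simpa [f.injective hc] using hac

theorem Connected.nonempty_iso_cycleGraph [Fintype V] [DecidableRel G.Adj] (hG : G.Connected)
    (h2 : G.IsRegularOfDegree 2) : Nonempty (G ≃g cycleGraph (Fintype.card V)) := by
  -- with as many edges as vertices `G` is not a tree, and any cycle of `G` is then a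
  -- degree-preserving copy of a cycle graph
  have hnot : ¬ G.IsAcyclic := fun hac => by
    have htree := (⟨hG, hac⟩ : G.IsTree).card_edgeFinset
    have hsum := G.sum_degrees_eq_twice_card_edges
    simp only [h2.degree_eq, Finset.sum_const, Finset.card_univ, smul_eq_mul] at hsum
    omega
  obtain ⟨v, c, hc⟩ : ∃ v, ∃ c : G.Walk v v, c.IsCycle := by simpa [IsAcyclic] using hnot
  obtain ⟨n, hn⟩ := Nat.exists_eq_add_of_le' hc.three_le_length
  obtain ⟨f⟩ := (cycleGraph_isContained_iff (by omega : 2 < n + 3)).2 ⟨v, c, hc, hn⟩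
  obtain ⟨φ⟩ := f.nonempty_iso_of_degree_eq hG.preconnected
    fun a => by rw [h2.degree_eq, cycleGraph_degree_three_le]
  have hcard : Fintype.card V = n + 3 := by simpa using (Fintype.card_congr φ.toEquiv).symm
  rw [hcard]
  exact ⟨φ.symm⟩

lemma subdivisionGraph_isLeft_ne_of_adj {x y : V ⊕ G.edgeSet}
    (h : (subdivisionGraph G).Adj x y) : x.isLeft ≠ y.isLeft := by
  rcases x with u | e <;> rcases y with v | f
  exacts [h.elim, by simp, by simp, h.elim]

lemma ncard_neighborSet_subdivisionGraph_inl (u : V) :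
    ((subdivisionGraph G).neighborSet (.inl u)).ncard = (G.neighborSet u).ncard := by
  classical
  have hnbr : (subdivisionGraph G).neighborSet (.inl u) =
      Sum.inr '' (Subtype.val ⁻¹' G.incidenceSet u) := by
    ext (v | e)
    · simp [subdivisionGraph]
    · simp [subdivisionGraph, incidenceSet]
  rw [hnbr, Set.ncard_image_of_injective _ Sum.inr_injective,
    Set.ncard_preimage_of_injective_subset_range Subtype.val_injective
      (by simpa using G.incidenceSet_subset u),
    ← Nat.card_coe_set_eq, ← Nat.card_coe_set_eq,
    Nat.card_congr (G.incidenceSetEquivNeighborSet u)]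

lemma subdivisionGraph_mapsTo_inl [Fintype V] (hG : G.Connected)
    (hcyc : IsEmpty (G ≃g cycleGraph (Fintype.card V)))
    (φ : subdivisionGraph G ≃g subdivisionGraph G) :
    Set.MapsTo φ (Set.range .inl) (Set.range .inl) := by
  classical
  -- `inl a` and `inl b` are at distance two in the bipartite graph `S(G)`
  have hside (a b : V) (hab : G.Adj a b) : (φ (.inl a)).isLeft = (φ (.inl b)).isLeft := by
    have h₁ := subdivisionGraph_isLeft_ne_of_adj
      (φ.map_adj_iff.2 (show (subdivisionGraph G).Adj (.inl a) (.inr ⟨s(a, b), hab⟩) from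
        Sym2.mem_mk_left a b))
    have h₂ := subdivisionGraph_isLeft_ne_of_adj
      (φ.map_adj_iff.2 (show (subdivisionGraph G).Adj (.inr ⟨s(a, b), hab⟩) (.inl b) from
        Sym2.mem_mk_right a b))
    revert h₁ h₂
    cases (φ (.inl a)).isLeft <;> cases (φ (.inr ⟨s(a, b), hab⟩)).isLeft <;>
      cases (φ (.inl b)).isLeft <;> simp
  rintro _ ⟨u, rfl⟩
  rcases hu : φ (.inl u) with v | e₀
  · exact ⟨v, rfl⟩
  exfalso
  have hall (w : V) : (φ (.inl w)).isLeft = false := by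
    by_contra hw
    obtain ⟨p, hp, q, hq, hpq⟩ := hG.preconnected.exists_adj_mem_not_mem
      (S := {w | (φ (.inl w)).isLeft = false}) (v := u) (by simp [hu]) hw
    exact hq ((hside p q hpq).symm.trans hp)
  have hreg : G.IsRegularOfDegree 2 := fun w => by
    obtain ⟨e, he⟩ : ∃ e, φ (.inl w) = .inr e := by
      rcases h : φ (.inl w) with v | e
      · simpa [h] using hall w
      · exact ⟨e, rfl⟩
    rw [← card_neighborFinset_eq_degree, neighborFinset, ← Set.ncard_eq_toFinset_card',
      ← ncard_neighborSet_subdivisionGraph_inl, ← φ.ncard_neighborSet, he]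
    exact ncard_neighborSet_inr _ (fun _ _ => Iff.rfl) (fun _ _ => id) e
  exact hcyc.false (hG.nonempty_iso_cycleGraph hreg).some

end SimpleGraph

/-- For a connected graph `G` of order `n ≥ 5` that is not a cycle,
`Aut(G) ≅ Aut(L(G)) ≅ Aut(S(G)) ≅ Aut(C(G)) ≅ Aut(M(G))` as abstract groups. -/
theorem stmt_5 {V : Type*} [Fintype V] (G : SimpleGraph V)
    (hconn : G.Connected) (hn : 5 ≤ Fintype.card V)
    (hcyc : IsEmpty (G ≃g cycleGraph (Fintype.card V))) :
    Nonempty ((G ≃g G) ≃* (lineG G ≃g lineG G)) ∧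
    Nonempty ((G ≃g G) ≃* (subdivisionGraph G ≃g subdivisionGraph G)) ∧
    Nonempty ((G ≃g G) ≃* (centralGraph G ≃g centralGraph G)) ∧
    Nonempty ((G ≃g G) ≃* (middleGraph G ≃g middleGraph G)) := by
  have hn' : 4 ≤ Nat.card V := by
    rw [Nat.card_eq_fintype_card]
    omega
  exact ⟨hconn.nonempty_mulEquiv_aut_lineG hn,
    nonempty_mulEquiv_aut_of_mapsTo_inl _ subdivisionGraph_adj_sumMapEdgeSet
      (fun _ _ => Iff.rfl) (subdivisionGraph_mapsTo_inl hconn hcyc),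
    nonempty_mulEquiv_aut_of_mapsTo_inl _ centralGraph_adj_sumMapEdgeSet
      (fun _ _ => Iff.rfl) (centralGraph_mapsTo_inl hn'),
    nonempty_mulEquiv_aut_of_mapsTo_inl _ middleGraph_adj_sumMapEdgeSet
      (fun _ _ => Iff.rfl) middleGraph_mapsTo_inl⟩
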